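/- The DA-OA mechanism is incentive-compatible: for every profile (P, T) of true preferences and true category memberships, every individual i, and every misreport (P̃_i, t̃_i) with t̃_i ∈ {t(i), GC}, the institution i receives under DA-OA at the truthful profile is weakly preferred by i (under the true P_i) to the institution i receives under DA-OA at the profile where i reports (P̃_i, t̃_i) and all others report truthfully. -/

import Mathlib

open Finset

/- `α` : individuals, `σ` : institutions, `ρ` : reserve categories.
Merit at institution `s` is given by an injective score `score s : α → ℕ`
(higher score = higher merit, `i ≻_s j` iff `score s j < score s i`).
Reported category membership is `τ : α → Option ρ` (`none` = general
category).  Preferences of individual `i` over `Option σ` (`none` = being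
unassigned) are given by an injective utility `ui i : Option σ → ℕ`. -/
variable {α σ ρ : Type*} [Fintype α] [DecidableEq α]
  [Fintype σ] [DecidableEq σ] [Fintype ρ] [DecidableEq ρ]

/-- The top-`k` elements of `A` under score `f`: members of `A` with fewer
than `k` strictly higher-scored elements of `A` (all of `A` if `|A| ≤ k`). -/
def topk (k : ℕ) (f : α → ℕ) (A : Finset α) : Finset α :=
  A.filter fun i => (A.filter fun j => f i < f j).card < k

/-- Open-category selection of institution `s`'s over-and-above choice rule. -/
def oaOpen (acc : σ → Finset α) (score : σ → α → ℕ) (qo : σ → ℕ)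
    (s : σ) (A : Finset α) : Finset α :=
  topk (qo s) (score s) (A ∩ acc s)

/-- Category-`r` selection of institution `s`'s over-and-above choice rule. -/
def oaRes (acc : σ → Finset α) (score : σ → α → ℕ) (qo : σ → ℕ)
    (q : σ → ρ → ℕ) (τ : α → Option ρ) (s : σ) (r : ρ) (A : Finset α) :
    Finset α :=
  topk (q s r) (score s)
    (((A ∩ acc s) \ oaOpen acc score qo s A).filter fun i => τ i = some r)

/-- The set chosen by institution `s`'s over-and-above choice rule. -/
def oaChosen (acc : σ → Finset α) (score : σ → α → ℕ) (qo : σ → ℕ)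
    (q : σ → ρ → ℕ) (τ : α → Option ρ) (s : σ) (A : Finset α) : Finset α :=
  oaOpen acc score qo s A ∪
    Finset.univ.biUnion fun r => oaRes acc score qo q τ s r A

/-- An assignment: each individual gets `none` (unassigned) or a pair
`(s, c)` of an institution and a category (`c = none` is the open category),
such that reserved positions only go to individuals of the corresponding
reported category, all assigned individuals are acceptable at their
institution, and category capacities are respected. -/
def IsAssignment (acc : σ → Finset α) (qo : σ → ℕ) (q : σ → ρ → ℕ)
    (τ : α → Option ρ) (η : α → Option (σ × Option ρ)) : Prop :=
  (∀ i s c, η i = some (s, c) → c = none ∨ c = τ i) ∧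
  (∀ i s c, η i = some (s, c) → i ∈ acc s) ∧
  (∀ s, (Finset.univ.filter fun i => η i = some (s, none)).card ≤ qo s) ∧
  (∀ s r, (Finset.univ.filter fun i => η i = some (s, some r)).card ≤ q s r)

/-- The matching induced by an assignment: the institution of `i`, if any. -/
def mu (η : α → Option (σ × Option ρ)) (i : α) : Option σ :=
  (η i).map Prod.fst

/-- The set of individuals matched to institution `s`. -/
def muS (η : α → Option (σ × Option ρ)) (s : σ) : Finset α :=
  Finset.univ.filter fun i => (η i).map Prod.fst = some s

/-- Individual rationality: everyone weakly prefers their assignment to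
being unassigned. -/
def IndRational (ui : α → Option σ → ℕ) (η : α → Option (σ × Option ρ)) :
    Prop :=
  ∀ i, ui i none ≤ ui i (mu η i)

/-- Within-category fairness of an assignment: whenever `i` strictly prefers
`s` to their assignment, every open-category position at `s` is held by a
higher-merit individual and, if `i` has reported reserve category `r`, every
category-`r` position at `s` is held by a higher-merit individual. -/
def WithinCatFair (score : σ → α → ℕ) (τ : α → Option ρ)
    (ui : α → Option σ → ℕ) (η : α → Option (σ × Option ρ)) : Prop :=
  ∀ i s, ui i (mu η i) < ui i (some s) →
    (∀ j, η j = some (s, none) → score s i < score s j) ∧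
    (∀ r, τ i = some r → ∀ j, η j = some (s, some r) → score s i < score s j)

/-- Non-wastefulness of an assignment: whenever `i` strictly prefers `s` to
their assignment and is acceptable at `s`, all positions `i` is eligible for
at `s` are exhausted. -/
def NonWasteful (acc : σ → Finset α) (qo : σ → ℕ) (q : σ → ρ → ℕ)
    (τ : α → Option ρ) (ui : α → Option σ → ℕ)
    (η : α → Option (σ × Option ρ)) : Prop :=
  ∀ i s, ui i (mu η i) < ui i (some s) → i ∈ acc s →
    (Finset.univ.filter fun j => η j = some (s, none)).card = qo s ∧
    (∀ r, τ i = some r →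
      (Finset.univ.filter fun j => η j = some (s, some r)).card = q s r)

/-- The over-and-above principle for an assignment: at each institution, every
holder of an open-category position has higher merit than every holder of a
reserve-category position. -/
def OverAndAbove (score : σ → α → ℕ) (η : α → Option (σ × Option ρ)) : Prop :=
  ∀ s i j (r : ρ), η i = some (s, none) → η j = some (s, some r) →
    score s j < score s i

/-- The best (reported-)acceptable institution of individual `i` that has not
yet rejected `i` (rejections recorded in `D`); `none` if there is none. -/
noncomputable def best (ui : α → Option σ → ℕ) (i : α) (D : Finset σ) : Option σ :=
  ((Finset.univ.filter fun s => s ∉ D ∧ ui i none < ui i (some s)).toList).argmax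
    fun s => ui i (some s)

/-- The applicants of institution `s` in the current step of deferred
acceptance, given the rejections `D` so far. -/
noncomputable def apps (ui : α → Option σ → ℕ) (D : α → Finset σ) (s : σ) : Finset α :=
  Finset.univ.filter fun i => best ui i (D i) = some s

/-- One step of the DA-OA algorithm: each individual proposes to their best
institution that has not rejected them yet, and each institution `s` rejects
the proposers not chosen by its over-and-above choice rule. -/
noncomputable def daStep (acc : σ → Finset α) (score : σ → α → ℕ) (qo : σ → ℕ)
    (q : σ → ρ → ℕ) (τ : α → Option ρ) (ui : α → Option σ → ℕ)
    (D : α → Finset σ) : α → Finset σ := fun i =>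
  D i ∪ Finset.univ.filter fun s =>
    best ui i (D i) = some s ∧ i ∉ oaChosen acc score qo q τ s (apps ui D s)

/-- The rejection state of the DA-OA algorithm after enough steps to
guarantee that a fixed point (no further rejections) has been reached. -/
noncomputable def daState (acc : σ → Finset α) (score : σ → α → ℕ) (qo : σ → ℕ)
    (q : σ → ρ → ℕ) (τ : α → Option ρ) (ui : α → Option σ → ℕ) :
    α → Finset σ :=
  (daStep acc score qo q τ ui)^[Fintype.card α * Fintype.card σ + 1]
    fun _ => ∅

/-- The outcome of the DA-OA mechanism: each individual finally held by an
institution is assigned the institution-category pair under which the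
over-and-above choice rule last selected them; everyone else gets `none`. -/
noncomputable def daAssign (acc : σ → Finset α) (score : σ → α → ℕ) (qo : σ → ℕ)
    (q : σ → ρ → ℕ) (τ : α → Option ρ) (ui : α → Option σ → ℕ) :
    α → Option (σ × Option ρ) := fun i =>
  match best ui i (daState acc score qo q τ ui i) with
  | none => none
  | some s =>
    if i ∈ oaOpen acc score qo s (apps ui (daState acc score qo q τ ui) s) then
      some (s, none)
    else
      match τ i with
      | none => none
      | some r =>
        if i ∈ oaRes acc score qo q τ s r
            (apps ui (daState acc score qo q τ ui) s) then
          some (s, some r)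
        else none

/-!
The over-and-above choice rule of every institution is substitutable and satisfies the law of
aggregate demand. Hence the DA-OA matching is stable, every individual weakly prefers it to any
other stable matching, and the rural hospitals theorem holds: whoever it matches is matched in
every stable matching.

Suppose a misreport gets `i` into an institution `s` that `i` truly prefers to its truthful
assignment. That outcome stays stable when `i` instead reports `s` as its only acceptable
institution, so this report also gets `i` into `s`; it still does when `i` declares its true
category rather than the general one, since that only adds competition for positions `i` does
not hold. Now let `i` report its true preference truncated below `s`. By the rural hospitals
theorem this report gets `i` matched, hence to an institution at least as good as `s`, and the
resulting matching is stable for the truthful profile, contradicting optimality.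
-/

set_option linter.unusedSectionVars false

section Choice

variable {β : Type*} [DecidableEq β]

/-- Substitutability, and the law of aggregate demand as `card_mono`. -/
structure IsSubstitutableChoice (C : Finset β → Finset β) : Prop where
  subset : ∀ A, C A ⊆ A
  subst : ∀ ⦃X Y⦄, X ⊆ Y → C Y ∩ X ⊆ C X
  card_mono : Monotone fun A => (C A).card

namespace IsSubstitutableChoice

variable {C : Finset β → Finset β}

theorem mem_of_subset (hC : IsSubstitutableChoice C) {X Y : Finset β} (hXY : X ⊆ Y) {j : β}
    (hj : j ∈ C Y) (hjX : j ∈ X) : j ∈ C X :=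
  hC.subst hXY (mem_inter.mpr ⟨hj, hjX⟩)

/-- Irrelevance of rejected applicants. -/
theorem eq_of_subset (hC : IsSubstitutableChoice C) {B Z : Finset β} (hBZ : C B ⊆ Z)
    (hZB : Z ⊆ B) : C Z = C B :=
  (eq_of_subset_of_card_le (fun _ hj => hC.mem_of_subset hZB hj (hBZ hj))
    (hC.card_mono hZB)).symm

theorem notMem_insert (hC : IsSubstitutableChoice C) {X Y : Finset β} {j : β} (hjX : j ∈ X)
    (hj : j ∉ C X) (hXY : C X ⊆ Y) : j ∉ C (insert j Y) := by
  have hjZ : j ∉ C (X ∪ Y) := fun h => hj (hC.mem_of_subset subset_union_left h hjX)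
  have hCZ : C (X ∪ Y) ⊆ insert j Y := by
    intro x hx
    rcases mem_union.mp (hC.subset _ hx) with hxX | hxY
    · exact mem_insert_of_mem (hXY (hC.mem_of_subset subset_union_left hx hxX))
    · exact mem_insert_of_mem hxY
  rwa [hC.eq_of_subset hCZ (insert_subset (mem_union_left _ hjX) subset_union_right)]

end IsSubstitutableChoice

end Choice

theorem Function.isFixedPt_iterate_of_lt_potential {X : Type*} {g : X → X} (φ : X → ℕ) {N : ℕ}
    (hφ : ∀ x, φ x ≤ N) (hg : ∀ x, g x ≠ x → φ x < φ (g x)) (x : X) :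
    Function.IsFixedPt g (g^[N + 1] x) := by
  have key (n : ℕ) : Function.IsFixedPt g (g^[n] x) ∨ n ≤ φ (g^[n] x) := by
    induction n with
    | zero => exact Or.inr (Nat.zero_le _)
    | succ n ih =>
      rw [Function.iterate_succ_apply']
      by_cases hfix : Function.IsFixedPt g (g^[n] x)
      · exact Or.inl (by rw [hfix]; exact hfix)
      · exact Or.inr ((ih.resolve_left hfix).trans_lt (hg _ hfix))
  exact (key (N + 1)).resolve_right fun h => by linarith [hφ (g^[N + 1] x)]

section TopK

variable {k : ℕ} {f : α → ℕ} {A B : Finset α}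

theorem mem_topk {j : α} : j ∈ topk k f A ↔ j ∈ A ∧ (A.filter fun x => f j < f x).card < k :=
  mem_filter

theorem topk_subset : topk k f A ⊆ A :=
  filter_subset _ _

theorem mem_topk_of_subset (hAB : A ⊆ B) {j : α} (hj : j ∈ topk k f B) (hjA : j ∈ A) :
    j ∈ topk k f A :=
  mem_topk.mpr ⟨hjA, (card_le_card (filter_subset_filter _ hAB)).trans_lt (mem_topk.mp hj).2⟩

theorem card_topk (hf : Function.Injective f) (A : Finset α) :
    (topk k f A).card = min k A.card := by
  set rank : α → ℕ := fun x => (A.filter fun y => f x < f y).card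
  have rank_lt_rank {x y : α} (hy : y ∈ A) (hxy : f x < f y) : rank y < rank x := by
    refine card_lt_card ⟨fun z hz => ?_, fun h => ?_⟩
    · exact mem_filter.mpr ⟨(mem_filter.mp hz).1, hxy.trans (mem_filter.mp hz).2⟩
    · exact lt_irrefl _ (mem_filter.mp (h (mem_filter.mpr ⟨hy, hxy⟩))).2
  have hinj : Set.InjOn rank A := by
    intro x hx y hy hxy
    rcases lt_trichotomy (f x) (f y) with h | h | h
    · exact absurd hxy (rank_lt_rank hy h).ne'
    · exact hf h
    · exact absurd hxy (rank_lt_rank hx h).ne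
  have himage : A.image rank = range A.card := by
    refine eq_of_subset_of_card_le (fun v hv => ?_) (by rw [card_range, card_image_of_injOn hinj])
    obtain ⟨x, hx, rfl⟩ := mem_image.mp hv
    exact mem_range.mpr (card_lt_card (filter_ssubset.mpr ⟨x, hx, lt_irrefl _⟩))
  calc (topk k f A).card = ((A.filter fun x => rank x < k).image rank).card :=
        (card_image_of_injOn (hinj.mono (filter_subset _ _))).symm
    _ = ((range A.card).filter (· < k)).card := by rw [← himage, filter_image]
    _ = min k A.card := by
        rw [← card_range (min k A.card)]
        congr 1
        ext x
        simp [and_comm]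

theorem card_topk_mono (hf : Function.Injective f) (hAB : A ⊆ B) :
    (topk k f A).card ≤ (topk k f B).card := by
  rw [card_topk hf, card_topk hf]
  exact min_le_min_left k (card_le_card hAB)

end TopK

section OverAndAbove

variable {acc : σ → Finset α} {score : σ → α → ℕ} {qo : σ → ℕ} {q : σ → ρ → ℕ}
  {τ : α → Option ρ} {s : σ} {X Y : Finset α}

def oaPool (acc : σ → Finset α) (score : σ → α → ℕ) (qo : σ → ℕ) (τ : α → Option ρ) (s : σ)
    (r : ρ) (A : Finset α) : Finset α :=
  ((A ∩ acc s) \ oaOpen acc score qo s A).filter fun i => τ i = some r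

theorem oaRes_eq_topk_oaPool (r : ρ) (A : Finset α) :
    oaRes acc score qo q τ s r A = topk (q s r) (score s) (oaPool acc score qo τ s r A) :=
  rfl

theorem mem_oaPool {r : ρ} {A : Finset α} {j : α} :
    j ∈ oaPool acc score qo τ s r A ↔
      (j ∈ A ∩ acc s ∧ j ∉ oaOpen acc score qo s A) ∧ τ j = some r := by
  rw [oaPool, mem_filter, mem_sdiff]

theorem mem_oaOpen_of_subset (hXY : X ⊆ Y) {j : α} (hj : j ∈ oaOpen acc score qo s Y)
    (hjX : j ∈ X) : j ∈ oaOpen acc score qo s X :=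
  mem_topk_of_subset (inter_subset_inter_right hXY) hj
    (mem_inter.mpr ⟨hjX, (mem_inter.mp (topk_subset hj)).2⟩)

theorem oaPool_mono (hXY : X ⊆ Y) (r : ρ) :
    oaPool acc score qo τ s r X ⊆ oaPool acc score qo τ s r Y := by
  intro j hj
  obtain ⟨⟨hjX, hjo⟩, hjr⟩ := mem_oaPool.mp hj
  exact mem_oaPool.mpr ⟨⟨inter_subset_inter_right hXY hjX,
    fun h => hjo (mem_oaOpen_of_subset hXY h (mem_inter.mp hjX).1)⟩, hjr⟩

theorem mem_oaChosen {A : Finset α} {j : α} :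
    j ∈ oaChosen acc score qo q τ s A ↔
      j ∈ oaOpen acc score qo s A ∨ ∃ r, j ∈ oaRes acc score qo q τ s r A := by
  simp [oaChosen]

theorem card_oaChosen (A : Finset α) :
    (oaChosen acc score qo q τ s A).card =
      (oaOpen acc score qo s A).card + ∑ r, (oaRes acc score qo q τ s r A).card := by
  have hres {r : ρ} {j : α} (hj : j ∈ oaRes acc score qo q τ s r A) :=
    mem_oaPool.mp (topk_subset hj)
  rw [oaChosen, card_union_of_disjoint, card_biUnion]
  · intro r _ r' _ hrr'
    refine disjoint_left.mpr fun j hj hj' => hrr' ?_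
    exact Option.some_injective _ ((hres hj).2.symm.trans (hres hj').2)
  · refine disjoint_left.mpr fun j hj hj' => ?_
    obtain ⟨r, -, hjr⟩ := mem_biUnion.mp hj'
    exact (hres hjr).1.2 hj

theorem isSubstitutableChoice_oaChosen (hscore : Function.Injective (score s)) :
    IsSubstitutableChoice (oaChosen acc score qo q τ s) where
  subset A j hj := by
    obtain hj | ⟨r, hj⟩ := mem_oaChosen.mp hj
    · exact (mem_inter.mp (topk_subset hj)).1
    · exact (mem_inter.mp (mem_oaPool.mp (topk_subset hj)).1.1).1
  subst X Y hXY j hj := by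
    obtain ⟨hjY, hjX⟩ := mem_inter.mp hj
    refine mem_oaChosen.mpr ?_
    obtain hjo | ⟨r, hjr⟩ := mem_oaChosen.mp hjY
    · exact Or.inl (mem_oaOpen_of_subset hXY hjo hjX)
    by_cases hjo : j ∈ oaOpen acc score qo s X
    · exact Or.inl hjo
    obtain ⟨⟨hjacc, -⟩, hjτ⟩ := mem_oaPool.mp (topk_subset hjr)
    refine Or.inr ⟨r, mem_topk_of_subset (oaPool_mono hXY r) hjr ?_⟩
    exact mem_oaPool.mpr ⟨⟨mem_inter.mpr ⟨hjX, (mem_inter.mp hjacc).2⟩, hjo⟩, hjτ⟩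
  card_mono X Y hXY := by
    simp only [card_oaChosen]
    exact add_le_add (card_topk_mono hscore (inter_subset_inter_right hXY))
      (sum_le_sum fun r _ => card_topk_mono hscore (oaPool_mono hXY r))

theorem oaChosen_congr {τ' : α → Option ρ}
    (h : ∀ j ∈ X ∩ acc s, j ∉ oaOpen acc score qo s X → τ j = τ' j) :
    oaChosen acc score qo q τ s X = oaChosen acc score qo q τ' s X := by
  have hpool (r : ρ) : oaPool acc score qo τ s r X = oaPool acc score qo τ' s r X :=
    filter_congr fun j hj => by
      obtain ⟨hjX, hjo⟩ := mem_sdiff.mp hj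
      rw [h j hjX hjo]
  simp only [oaChosen, oaRes_eq_topk_oaPool, hpool]

/-- Declaring fewer category memberships can only help an individual whose own
report is unchanged. -/
theorem mem_oaChosen_of_le {τ' : α → Option ρ} (hτ : ∀ j r, τ j = some r → τ' j = some r)
    {j : α} (hj : τ j = τ' j) (hmem : j ∈ oaChosen acc score qo q τ' s X) :
    j ∈ oaChosen acc score qo q τ s X := by
  refine mem_oaChosen.mpr ((mem_oaChosen.mp hmem).imp id fun ⟨r, hjr⟩ => ⟨r, ?_⟩)
  obtain ⟨hjX, hjτ⟩ := mem_oaPool.mp (topk_subset hjr)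
  refine mem_topk_of_subset (fun x hx => ?_) hjr (mem_oaPool.mpr ⟨hjX, hj.trans hjτ⟩)
  obtain ⟨hxX, hxτ⟩ := mem_oaPool.mp hx
  exact mem_oaPool.mpr ⟨hxX, hτ x r hxτ⟩

end OverAndAbove

section Promote

/-- `v` with the alternatives satisfying `P` moved, in their order, above all others. -/
def promote {γ : Type*} [Fintype γ] (v : γ → ℕ) (P : γ → Prop) [DecidablePred P] (o : γ) : ℕ :=
  if P o then v o + (univ.sup v + 1) else v o

variable {γ : Type*} [Fintype γ] {v : γ → ℕ} {P : γ → Prop} [DecidablePred P] {o o' : γ}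

theorem promote_lt_promote (ho : ¬P o) (ho' : P o') : promote v P o < promote v P o' := by
  simp only [promote, if_neg ho, if_pos ho']
  have := le_sup (f := v) (mem_univ o)
  omega

theorem promote_lt_promote_iff (ho : P o) (ho' : P o') :
    promote v P o < promote v P o' ↔ v o < v o' := by
  simp only [promote, if_pos ho, if_pos ho', add_lt_add_iff_right]

theorem promote_injective (hv : Function.Injective v) : Function.Injective (promote v P) := by
  intro o o' h
  by_cases ho : P o <;> by_cases ho' : P o'
  · simp only [promote, if_pos ho, if_pos ho', add_left_inj] at h
    exact hv h
  · exact absurd h (promote_lt_promote ho' ho).ne'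
  · exact absurd h (promote_lt_promote ho ho').ne
  · simp only [promote, if_neg ho, if_neg ho'] at h
    exact hv h

end Promote

section Preferences

variable {v : Option σ → ℕ}

/-- The truncation of `v` below `s`: every institution worse than `s` becomes unacceptable. -/
theorem exists_truncation (hv : Function.Injective v) {s : σ} (hs : v none < v (some s)) :
    ∃ w : Option σ → ℕ, Function.Injective w ∧ w none < w (some s) ∧
      (∀ o, w none < w o → v (some s) ≤ v o) ∧
      ∀ o o', v (some s) ≤ v o → v o < v o' → w o < w o' := by
  refine ⟨promote v fun o => o = none ∨ v (some s) ≤ v o, promote_injective hv,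
    (promote_lt_promote_iff (.inl rfl) (.inr le_rfl)).mpr hs, fun o h => ?_,
    fun o o' ho hoo' => (promote_lt_promote_iff (.inr ho) (.inr (ho.trans hoo'.le))).mpr hoo'⟩
  by_cases ho : o = none ∨ v (some s) ≤ v o
  · rcases ho with rfl | ho
    · exact absurd h (lt_irrefl _)
    · exact ho
  · exact absurd h (promote_lt_promote (P := fun o => o = none ∨ v (some s) ≤ v o) ho
      (.inl rfl)).not_gt

def OnlyAcceptable (w : Option σ → ℕ) (s : σ) : Prop :=
  ∀ s', w none < w (some s') ↔ s' = s

theorem OnlyAcceptable.none_lt {w : Option σ → ℕ} {s : σ} (hw : OnlyAcceptable w s) :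
    w none < w (some s) :=
  (hw s).mpr rfl

theorem OnlyAcceptable.le {w : Option σ → ℕ} {s : σ} (hw : OnlyAcceptable w s) (o : Option σ) :
    w o ≤ w (some s) := by
  rcases o with _ | s'
  · exact hw.none_lt.le
  · by_cases hs' : s' = s
    · rw [hs']
    · exact (not_lt.mp fun h => hs' ((hw s').mp h)).trans hw.none_lt.le

theorem exists_onlyAcceptable (s : σ) :
    ∃ w : Option σ → ℕ, Function.Injective w ∧ OnlyAcceptable w s := by
  set v := promote (fun o => (Fintype.equivFin (Option σ) o : ℕ)) (· = some s)
  have hv : Function.Injective v :=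
    promote_injective (Fin.val_injective.comp (Fintype.equivFin (Option σ)).injective)
  have hvs (s' : σ) (hs' : s' ≠ s) : v (some s') < v (some s) :=
    promote_lt_promote (by simpa using hs') rfl
  obtain ⟨w, hw, hws, hup, -⟩ := exists_truncation hv (promote_lt_promote (by simp) rfl)
  refine ⟨w, hw, fun s' => ⟨fun h => ?_, fun h => h ▸ hws⟩⟩
  by_contra hs'
  exact (hup _ h).not_gt (hvs s' hs')

end Preferences

section Best

variable {u : α → Option σ → ℕ} {i : α} {D D' : Finset σ} {s s' : σ}

theorem best_spec (h : best u i D = some s) : s ∉ D ∧ u i none < u i (some s) :=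
  (mem_filter.mp (mem_toList.mp (List.argmax_mem h))).2

theorem le_of_best_eq (h : best u i D = some s) (hs' : s' ∉ D)
    (hacc : u i none < u i (some s')) : u i (some s') ≤ u i (some s) :=
  List.le_of_mem_argmax (f := fun s => u i (some s))
    (mem_toList.mpr (mem_filter.mpr ⟨mem_univ _, hs', hacc⟩)) (Option.mem_def.mpr h)

theorem exists_best_eq (hs' : s' ∉ D) (hacc : u i none < u i (some s')) :
    ∃ s, best u i D = some s ∧ u i (some s') ≤ u i (some s) := by
  cases hb : best u i D with
  | some s => exact ⟨s, rfl, le_of_best_eq hb hs' hacc⟩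
  | none =>
    have hmem : s' ∈ (univ.filter fun s => s ∉ D ∧ u i none < u i (some s)).toList :=
      mem_toList.mpr (mem_filter.mpr ⟨mem_univ s', hs', hacc⟩)
    rw [List.argmax_eq_none.mp hb] at hmem
    exact absurd hmem List.not_mem_nil

theorem best_eq_of_subset (hu : Function.Injective (u i)) (h : best u i D = some s)
    (hDD' : D ⊆ D') (hs : s ∉ D') : best u i D' = some s := by
  obtain ⟨s', hb, hle⟩ := exists_best_eq hs (best_spec h).2
  have hb' := best_spec hb
  rw [hb, hu (le_antisymm (le_of_best_eq h (fun h' => hb'.1 (hDD' h')) hb'.2) hle)]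

end Best

def matchedAt (m : α → Option σ) (s : σ) : Finset α :=
  univ.filter fun j => m j = some s

theorem mem_matchedAt {m : α → Option σ} {s : σ} {j : α} :
    j ∈ matchedAt m s ↔ m j = some s := by
  simp [matchedAt]

theorem card_filter_eq_none_add_sum_card_matchedAt (m : α → Option σ) :
    (univ.filter fun j => m j = none).card + ∑ s, (matchedAt m s).card = Fintype.card α := by
  calc _ = ∑ o, (univ.filter fun j => m j = o).card := (Fintype.sum_option _).symm
    _ = Fintype.card α := (card_eq_sum_card_fiberwise fun j _ => mem_univ (m j)).symm

structure IsStable (C : σ → Finset α → Finset α) (u : α → Option σ → ℕ) (m : α → Option σ) :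
    Prop where
  rational : ∀ j s, m j = some s → u j none < u j (some s)
  chosen : ∀ s, C s (matchedAt m s) = matchedAt m s
  unblocked : ∀ j s, u j (m j) < u j (some s) → j ∉ C s (insert j (matchedAt m s))

namespace IsStable

variable {C : σ → Finset α → Finset α} {u : α → Option σ → ℕ} {m : α → Option σ}

theorem update (hm : IsStable C u m) {i : α} {w : Option σ → ℕ}
    (hrat : ∀ s, m i = some s → w none < w (some s))
    (hblock : ∀ s, w (m i) < w (some s) → i ∉ C s (insert i (matchedAt m s))) :
    IsStable C (Function.update u i w) m where
  rational j s := by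
    rcases eq_or_ne j i with rfl | hj
    · simpa using hrat s
    · simpa [hj] using hm.rational j s
  chosen := hm.chosen
  unblocked j s := by
    rcases eq_or_ne j i with rfl | hj
    · simpa using hblock s
    · simpa [hj] using hm.unblocked j s

end IsStable

theorem injective_update {u : α → Option σ → ℕ} (hu : ∀ j, Function.Injective (u j)) {i : α}
    {w : Option σ → ℕ} (hw : Function.Injective w) (j : α) :
    Function.Injective (Function.update u i w j) := by
  rcases eq_or_ne j i with rfl | hj
  · simpa using hw
  · simpa [hj] using hu j

namespace DA

variable (C : σ → Finset α → Finset α) (u : α → Option σ → ℕ)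

noncomputable def step (D : α → Finset σ) : α → Finset σ := fun i =>
  D i ∪ univ.filter fun s => best u i (D i) = some s ∧ i ∉ C s (apps u D s)

noncomputable def state : α → Finset σ :=
  (step C u)^[Fintype.card α * Fintype.card σ + 1] fun _ => ∅

noncomputable def outcome (j : α) : Option σ :=
  best u j (state C u j)

theorem daState_eq (acc : σ → Finset α) (score : σ → α → ℕ) (qo : σ → ℕ) (q : σ → ρ → ℕ)
    (τ : α → Option ρ) : daState acc score qo q τ u = state (oaChosen acc score qo q τ) u :=
  rfl

theorem matchedAt_outcome (s : σ) : matchedAt (outcome C u) s = apps u (state C u) s :=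
  rfl

variable {C u}

theorem mem_apps {D : α → Finset σ} {s : σ} {j : α} : j ∈ apps u D s ↔ best u j (D j) = some s := by
  simp [apps]

theorem subset_step (D : α → Finset σ) (j : α) : D j ⊆ step C u D j :=
  subset_union_left

theorem mem_apps_step (hu : ∀ j, Function.Injective (u j)) {D : α → Finset σ} {s : σ} {j : α}
    (hj : j ∈ apps u D s) (hjC : j ∈ C s (apps u D s)) : j ∈ apps u (step C u D) s := by
  have hb := mem_apps.mp hj
  refine mem_apps.mpr (best_eq_of_subset (hu j) hb (subset_step D j) fun h => ?_)
  rcases mem_union.mp h with h | h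
  · exact (best_spec hb).1 h
  · exact (mem_filter.mp h).2.2 hjC

variable (C u) in
def Justified (D : α → Finset σ) : Prop :=
  ∀ j s, s ∈ D j → j ∉ C s (insert j (apps u D s))

theorem justified_step (hC : ∀ s, IsSubstitutableChoice (C s))
    (hu : ∀ j, Function.Injective (u j)) {D : α → Finset σ} (hD : Justified C u D) :
    Justified C u (step C u D) := by
  intro j s hs
  set A := apps u D s
  have hrej : j ∉ C s (insert j A) := by
    rcases mem_union.mp hs with h | h
    · exact hD j s h
    · obtain ⟨-, hb, hj⟩ := mem_filter.mp h
      rwa [insert_eq_of_mem (mem_apps.mpr hb)]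
  have hheld : C s (insert j A) ⊆ apps u (step C u D) s := by
    intro x hx
    have hxA : x ∈ A := by
      rcases mem_insert.mp ((hC s).subset _ hx) with rfl | h
      · exact absurd hx hrej
      · exact h
    exact mem_apps_step hu hxA ((hC s).mem_of_subset (subset_insert j A) hx hxA)
  exact (hC s).notMem_insert (mem_insert_self j A) hrej hheld

theorem justified_state (hC : ∀ s, IsSubstitutableChoice (C s))
    (hu : ∀ j, Function.Injective (u j)) : Justified C u (state C u) := by
  have (n : ℕ) : Justified C u ((step C u)^[n] fun _ => ∅) := by
    induction n with
    | zero => exact fun j s hs => absurd hs (notMem_empty s)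
    | succ n ih => rw [Function.iterate_succ_apply']; exact justified_step hC hu ih
  exact this _

/-- Each round that changes the state adds a rejection, and there are at most `|α| * |σ|` of
them. -/
theorem isFixedPt_state : Function.IsFixedPt (step C u) (state C u) := by
  refine Function.isFixedPt_iterate_of_lt_potential (fun D => ∑ j, (D j).card)
    (fun D => ?_) (fun D hD => ?_) _
  · calc ∑ j, (D j).card ≤ ∑ _j : α, Fintype.card σ := sum_le_sum fun j _ => card_le_univ _
      _ = Fintype.card α * Fintype.card σ := by simp
  · obtain ⟨j, hj⟩ := Function.ne_iff.mp hD
    exact sum_lt_sum (fun j _ => card_le_card (subset_step D j))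
      ⟨j, mem_univ j, card_lt_card ((subset_step D j).ssubset_of_ne (Ne.symm hj))⟩

theorem mem_chosen_of_mem_apps_state {s : σ} {j : α} (hj : j ∈ apps u (state C u) s) :
    j ∈ C s (apps u (state C u) s) := by
  by_contra hjC
  have hb := mem_apps.mp hj
  have hs : s ∈ step C u (state C u) j := mem_union_right _ (mem_filter.mpr ⟨mem_univ s, hb, hjC⟩)
  rw [isFixedPt_state] at hs
  exact (best_spec hb).1 hs

theorem none_le_outcome (j : α) : u j none ≤ u j (outcome C u j) := by
  cases hj : outcome C u j with
  | none => exact le_rfl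
  | some s => exact (best_spec hj).2.le

theorem outcome_isStable (hC : ∀ s, IsSubstitutableChoice (C s))
    (hu : ∀ j, Function.Injective (u j)) : IsStable C u (outcome C u) where
  rational j s h := (best_spec h).2
  chosen s := by
    rw [matchedAt_outcome]
    exact Subset.antisymm ((hC s).subset _) fun j hj => mem_chosen_of_mem_apps_state hj
  unblocked j s h := by
    by_cases hs : s ∈ state C u j
    · exact justified_state hC hu j s hs
    · obtain ⟨s', hb, hle⟩ := exists_best_eq hs ((none_le_outcome j).trans_lt h)
      rw [outcome, hb] at h
      exact absurd (hle.trans_lt h) (lt_irrefl _)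

theorem lt_of_mem_apps_of_notMem_matchedAt (hu : ∀ j, Function.Injective (u j))
    {m : α → Option σ} (hm : IsStable C u m) {D : α → Finset σ}
    (hD : ∀ j s, m j = some s → s ∉ D j) {s : σ} {x : α} (hxA : x ∈ apps u D s)
    (hxM : x ∉ matchedAt m s) : u x (m x) < u x (some s) := by
  have hb := mem_apps.mp hxA
  cases hmx : m x with
  | none => exact (best_spec hb).2
  | some s' =>
    refine (le_of_best_eq hb (hD x s' hmx) (hm.rational x s' hmx)).lt_of_ne fun h => hxM ?_
    rw [mem_matchedAt, hmx, hu x h]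

theorem notMem_step (hC : ∀ s, IsSubstitutableChoice (C s)) (hu : ∀ j, Function.Injective (u j))
    {m : α → Option σ} (hm : IsStable C u m) {D : α → Finset σ}
    (hD : ∀ j s, m j = some s → s ∉ D j) : ∀ j s, m j = some s → s ∉ step C u D j := by
  intro j s hjs hs
  obtain h | h := mem_union.mp hs
  · exact hD j s hjs h
  obtain ⟨-, hb, hrej⟩ := mem_filter.mp h
  set A := apps u D s
  set M := matchedAt m s
  have hjA : j ∈ A := mem_apps.mpr hb
  have hjY : j ∉ C s (A ∪ M) := fun h' => hrej ((hC s).mem_of_subset subset_union_left h' hjA)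
  by_cases hYM : C s (A ∪ M) ⊆ M
  · have hjM : j ∈ C s M := (hm.chosen s).symm ▸ mem_matchedAt.mpr hjs
    exact hjY ((hC s).eq_of_subset hYM subset_union_right ▸ hjM)
  obtain ⟨x, hxY, hxM⟩ := not_subset.mp hYM
  have hxA : x ∈ A := (mem_union.mp ((hC s).subset _ hxY)).resolve_right hxM
  refine hm.unblocked x s (lt_of_mem_apps_of_notMem_matchedAt hu hm hD hxA hxM) ?_
  exact (hC s).mem_of_subset (insert_subset (mem_union_left _ hxA) subset_union_right) hxY
    (mem_insert_self x M)

/-- Optimality of deferred acceptance among stable matchings. -/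
theorem _root_.IsStable.le_outcome (hC : ∀ s, IsSubstitutableChoice (C s))
    (hu : ∀ j, Function.Injective (u j)) {m : α → Option σ} (hm : IsStable C u m) (j : α) :
    u j (m j) ≤ u j (outcome C u j) := by
  have hstate : ∀ j s, m j = some s → s ∉ state C u j := by
    suffices ∀ n j s, m j = some s → s ∉ ((step C u)^[n] fun _ => ∅) j from this _
    intro n
    induction n with
    | zero => exact fun j s _ => notMem_empty s
    | succ n ih => rw [Function.iterate_succ_apply']; exact notMem_step hC hu hm ih
  cases hj : m j with
  | none => exact none_le_outcome j
  | some s =>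
    obtain ⟨s', hb, hle⟩ := exists_best_eq (hstate j s hj) (hm.rational j s hj)
    rwa [outcome, hb]

theorem _root_.IsStable.card_matchedAt_outcome_le (hC : ∀ s, IsSubstitutableChoice (C s))
    (hu : ∀ j, Function.Injective (u j)) {m : α → Option σ} (hm : IsStable C u m) (s : σ) :
    (matchedAt (outcome C u) s).card ≤ (matchedAt m s).card := by
  set A := matchedAt (outcome C u) s
  set M := matchedAt m s
  have hYM : C s (A ∪ M) ⊆ M := by
    intro x hxY
    by_contra hxM
    have hxA : x ∈ A := (mem_union.mp ((hC s).subset _ hxY)).resolve_right hxM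
    have hle := hm.le_outcome hC hu x
    rw [mem_matchedAt.mp hxA] at hle
    refine hm.unblocked x s (hle.lt_of_ne fun h => hxM ?_) ?_
    · rw [mem_matchedAt, hu x h]
    · exact (hC s).mem_of_subset (insert_subset (mem_union_left _ hxA) subset_union_right) hxY
        (mem_insert_self x M)
  calc A.card = (C s A).card := by rw [(outcome_isStable hC hu).chosen s]
    _ ≤ (C s (A ∪ M)).card := (hC s).card_mono subset_union_left
    _ = M.card := by rw [← (hC s).eq_of_subset hYM subset_union_right, hm.chosen s]

/-- The rural hospitals theorem. -/
theorem _root_.IsStable.ne_none_of_outcome_ne_none (hC : ∀ s, IsSubstitutableChoice (C s))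
    (hu : ∀ j, Function.Injective (u j)) {m : α → Option σ} (hm : IsStable C u m) {j : α}
    (hj : outcome C u j ≠ none) : m j ≠ none := by
  have hsub : (univ.filter fun x => outcome C u x = none) ⊆ univ.filter fun x => m x = none := by
    intro x hx
    refine mem_filter.mpr ⟨mem_univ x, Option.eq_none_iff_forall_ne_some.mpr fun s hs => ?_⟩
    have h := hm.le_outcome hC hu x
    rw [hs, (mem_filter.mp hx).2] at h
    exact lt_irrefl _ ((hm.rational x s hs).trans_le h)
  have hcard := (card_filter_eq_none_add_sum_card_matchedAt m).trans
    (card_filter_eq_none_add_sum_card_matchedAt (outcome C u)).symm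
  have hsum := sum_le_sum fun s (_ : s ∈ univ) => hm.card_matchedAt_outcome_le hC hu s
  have heq := eq_of_subset_of_card_le hsub (by omega)
  intro hmj
  have hjm : j ∈ univ.filter fun x => m x = none := mem_filter.mpr ⟨mem_univ j, hmj⟩
  rw [← heq] at hjm
  exact hj (mem_filter.mp hjm).2

theorem outcome_eq_of_isStable (hC : ∀ s, IsSubstitutableChoice (C s))
    (hu : ∀ j, Function.Injective (u j)) {m : α → Option σ} (hm : IsStable C u m) {i : α}
    {s : σ} (hmi : m i = some s) (htop : ∀ o, u i o ≤ u i (some s)) :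
    outcome C u i = some s := by
  have hle := hm.le_outcome hC hu i
  rw [hmi] at hle
  exact hu i (le_antisymm (htop _) hle)

variable {i : α} {s : σ} {w : Option σ → ℕ}

theorem outcome_update_onlyAcceptable (hC : ∀ s, IsSubstitutableChoice (C s))
    (hu : ∀ j, Function.Injective (u j)) (hw_inj : Function.Injective w)
    (hw : OnlyAcceptable w s) (h : outcome C u i = some s) :
    outcome C (Function.update u i w) i = some s := by
  have hm := (outcome_isStable hC hu).update (i := i) (w := w)
    (fun s' hs' => Option.some_injective _ (h.symm.trans hs') ▸ hw.none_lt)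
    (fun s' hs' => absurd (hw.le (some s')) (by rw [h] at hs'; exact hs'.not_ge))
  exact outcome_eq_of_isStable hC (injective_update hu hw_inj) hm h (by simpa using hw.le)

theorem le_outcome_of_update_onlyAcceptable (hC : ∀ s, IsSubstitutableChoice (C s))
    (hu : ∀ j, Function.Injective (u j)) (hw_inj : Function.Injective w)
    (hw : OnlyAcceptable w s) (h : outcome C (Function.update u i w) i = some s)
    (hacc : u i none < u i (some s)) : u i (some s) ≤ u i (outcome C u i) := by
  obtain ⟨v, hv_inj, hv_acc, hv_up, hv_mono⟩ := exists_truncation (hu i) hacc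
  have hm := outcome_isStable hC (injective_update hu hv_inj (i := i))
  cases hy : outcome C (Function.update u i v) i with
  | some y =>
    have hsy : u i (some s) ≤ u i (some y) := hv_up _ (by simpa using hm.rational i y hy)
    have hm' : IsStable C u (outcome C (Function.update u i v)) := by
      simpa using hm.update (i := i) (w := u i)
        (fun s' hs' => hacc.trans_le (Option.some_injective _ (hy.symm.trans hs') ▸ hsy))
        (fun s' hs' => hm.unblocked i s' (by
          rw [hy] at hs' ⊢; simpa using hv_mono _ _ hsy hs'))
    exact hsy.trans (by simpa [hy] using hm'.le_outcome hC hu i)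
  | none =>
    have hm' : IsStable C (Function.update u i w) (outcome C (Function.update u i v)) := by
      simpa using hm.update (i := i) (w := w) (fun s' hs' => by simp [hy] at hs')
        (fun s' hs' => by
          rw [hy] at hs'
          obtain rfl := (hw s').mp hs'
          exact hm.unblocked i s' (by rw [hy]; simpa using hv_acc))
    exact absurd hy (hm'.ne_none_of_outcome_ne_none hC (injective_update hu hw_inj)
      (by simp [h]))

end DA

theorem IsStable.of_update_none {acc : σ → Finset α} {score : σ → α → ℕ} {qo : σ → ℕ}
    {q : σ → ρ → ℕ} {τ : α → Option ρ} {u : α → Option σ → ℕ} {m : α → Option σ} {i : α}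
    (hm : IsStable (oaChosen acc score qo q (Function.update τ i none)) u m)
    (htop : ∀ s, u i (some s) ≤ u i (m i)) : IsStable (oaChosen acc score qo q τ) u m where
  rational := hm.rational
  chosen s := by
    refine (oaChosen_congr fun j hj hjo => ?_).trans (hm.chosen s)
    rcases eq_or_ne j i with rfl | hji
    · have hjC : j ∈ oaChosen acc score qo q (Function.update τ j none) s (matchedAt m s) := by
        rw [hm.chosen s]
        exact (mem_inter.mp hj).1
      obtain ⟨r, hjr⟩ := (mem_oaChosen.mp hjC).resolve_left hjo
      simpa using (mem_oaPool.mp (topk_subset hjr)).2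
    · exact (Function.update_of_ne hji _ _).symm
  unblocked j s h := by
    have hji : j ≠ i := by
      rintro rfl
      exact absurd h (htop s).not_gt
    refine fun hjC => hm.unblocked j s h (mem_oaChosen_of_le (fun x r hx => ?_) ?_ hjC)
    · rcases eq_or_ne x i with rfl | hxi
      · simp at hx
      · rwa [Function.update_of_ne hxi] at hx
    · exact Function.update_of_ne hji _ _

namespace DA

theorem mu_daAssign (acc : σ → Finset α) (score : σ → α → ℕ) (qo : σ → ℕ) (q : σ → ρ → ℕ)
    (τ : α → Option ρ) (u : α → Option σ → ℕ) (j : α) :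
    mu (daAssign acc score qo q τ u) j = outcome (oaChosen acc score qo q τ) u j := by
  rw [mu, daAssign, daState_eq, ← outcome]
  cases hj : outcome (oaChosen acc score qo q τ) u j with
  | none => rfl
  | some s =>
    have hjC := mem_chosen_of_mem_apps_state (mem_apps.mpr hj)
    dsimp only
    split_ifs with hopen
    · rfl
    obtain ⟨r, hjr⟩ := (mem_oaChosen.mp hjC).resolve_left hopen
    rw [(mem_oaPool.mp (topk_subset hjr)).2]
    dsimp only
    rw [if_pos hjr]
    rfl

variable {u : α → Option σ → ℕ} {i : α} {s : σ}

theorem outcome_oaChosen_of_update_none {acc : σ → Finset α} {score : σ → α → ℕ} {qo : σ → ℕ}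
    {q : σ → ρ → ℕ} {t : α → Option ρ} (hscore : ∀ s, Function.Injective (score s))
    (hu : ∀ j, Function.Injective (u j)) (htop : ∀ o, u i o ≤ u i (some s))
    (h : outcome (oaChosen acc score qo q (Function.update t i none)) u i = some s) :
    outcome (oaChosen acc score qo q t) u i = some s := by
  have hC (τ : α → Option ρ) (s : σ) : IsSubstitutableChoice (oaChosen acc score qo q τ s) :=
    isSubstitutableChoice_oaChosen (hscore s)
  have hm := (outcome_isStable (hC _) hu).of_update_none fun s' => h ▸ htop (some s')
  exact outcome_eq_of_isStable (hC t) hu hm h htop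

end DA

/-- The DA-OA mechanism is incentive-compatible: for every
profile of true (strict) preferences `ui` and true category memberships `t`,
every individual `i`, and every misreport consisting of a strict preference
`ui'` and a membership `τ'` in `{t i, GC}`, the institution `i` receives under
DA-OA when everyone reports truthfully is weakly preferred by `i` (under the
true preference `ui i`) to the institution `i` receives when `i` reports
`(ui', τ')` and the others report truthfully. -/
theorem daOA_incentive_compatible
    (acc : σ → Finset α) (score : σ → α → ℕ)
    (hscore : ∀ s, Function.Injective (score s))
    (qo : σ → ℕ) (q : σ → ρ → ℕ)
    (t : α → Option ρ)
    (ui : α → Option σ → ℕ) (hui : ∀ j, Function.Injective (ui j))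
    (i : α) (ui' : Option σ → ℕ) (hui' : Function.Injective ui')
    (τ' : Option ρ) (hτ' : τ' = t i ∨ τ' = none) :
    ui i (mu (daAssign acc score qo q
        (Function.update t i τ') (Function.update ui i ui')) i) ≤
      ui i (mu (daAssign acc score qo q t ui) i) := by
  have hC (τ : α → Option ρ) (s : σ) : IsSubstitutableChoice (oaChosen acc score qo q τ s) :=
    isSubstitutableChoice_oaChosen (hscore s)
  rw [DA.mu_daAssign, DA.mu_daAssign]
  by_contra! hlt
  have hacc := (DA.none_le_outcome i).trans_lt hlt
  obtain ⟨s, hs⟩ := Option.ne_none_iff_exists'.mp fun h => lt_irrefl _ (h ▸ hacc)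
  obtain ⟨w, hw_inj, hw⟩ := exists_onlyAcceptable s
  have h₁ := DA.outcome_update_onlyAcceptable (hC _) (injective_update hui hui') hw_inj hw hs
  rw [Function.update_idem] at h₁
  have h₂ : DA.outcome (oaChosen acc score qo q t) (Function.update ui i w) i = some s := by
    rcases hτ' with rfl | rfl
    · rwa [Function.update_eq_self] at h₁
    · exact DA.outcome_oaChosen_of_update_none hscore (injective_update hui hw_inj)
        (by simpa using hw.le) h₁
  rw [hs] at hacc hlt
  exact hlt.not_ge (DA.le_outcome_of_update_onlyAcceptable (hC _) hui hw_inj hw h₂ hacc)
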